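/- arXiv:1401.0554 — 7 statements merged into one kernel-verified Lean document; each statement's English description precedes it below -/
import Mathlib

section
/- Let R be a unique factorization domain with field of fractions F, let π ∈ R be a prime element, and let ξ be a unit of R. If there exist elements a, b ∈ F with a² − ξ·b² = π, then the image of ξ in the field of fractions of R/(π) is a square. -/
/-!
Clear denominators to get `x² - ξ y² = π z²` in `R` with `z ≠ 0`. If `π ∣ y` then `π ∣ x²`, so
`π ∣ x`, hence `π² ∣ π z²` and `π ∣ z`: dividing `x, y, z` by `π` gives a new solution. Since `π`
has finite multiplicity in `z`, this descent stops at a solution with `π ∤ y`, and reducing it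
modulo `π` gives `ξ = (x / y)²` in `Frac(R/(π))`.
-/

section Descent

variable {R : Type*} [CommRing R] [IsDomain R] {π ξ : R}

theorem Prime.exists_sq_sub_mul_sq_eq_mul_sq_of_dvd (hπ : Prime π) {x y z : R} (hy : π ∣ y)
    (h : x ^ 2 - ξ * y ^ 2 = π * z ^ 2) :
    ∃ x' y' z', z = π * z' ∧ x' ^ 2 - ξ * y' ^ 2 = π * z' ^ 2 := by
  obtain ⟨y', rfl⟩ := hy
  obtain ⟨x', rfl⟩ : π ∣ x :=
    hπ.dvd_of_dvd_pow (n := 2) ⟨z ^ 2 + ξ * π * y' ^ 2, by linear_combination h⟩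
  have hz : z ^ 2 = π * (x' ^ 2 - ξ * y' ^ 2) :=
    mul_left_cancel₀ hπ.ne_zero (by linear_combination -h)
  obtain ⟨z', rfl⟩ : π ∣ z := hπ.dvd_of_dvd_pow ⟨_, hz⟩
  refine ⟨x', y', z', rfl, mul_left_cancel₀ (pow_ne_zero 2 hπ.ne_zero) ?_⟩
  linear_combination h

theorem Prime.exists_sq_sub_mul_sq_eq_mul_sq_of_not_pow_dvd (hπ : Prime π) (n : ℕ) {x y z : R}
    (hz : ¬π ^ n ∣ z) (h : x ^ 2 - ξ * y ^ 2 = π * z ^ 2) :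
    ∃ x y z : R, x ^ 2 - ξ * y ^ 2 = π * z ^ 2 ∧ ¬π ∣ y := by
  induction n generalizing x y z with
  | zero => exact absurd (pow_zero π ▸ one_dvd z) hz
  | succ n ih =>
    by_cases hy : π ∣ y
    · obtain ⟨x', y', z', rfl, h'⟩ := hπ.exists_sq_sub_mul_sq_eq_mul_sq_of_dvd hy h
      exact ih (fun hdvd => hz (pow_succ' π n ▸ mul_dvd_mul_left π hdvd)) h'
    · exact ⟨x, y, z, h, hy⟩

theorem Prime.exists_sq_sub_mul_sq_eq_mul_sq_not_dvd [WfDvdMonoid R] (hπ : Prime π) {x y z : R}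
    (hz : z ≠ 0) (h : x ^ 2 - ξ * y ^ 2 = π * z ^ 2) :
    ∃ x y z : R, x ^ 2 - ξ * y ^ 2 = π * z ^ 2 ∧ ¬π ∣ y :=
  have ⟨n, hn⟩ := FiniteMultiplicity.of_prime_left hπ hz
  hπ.exists_sq_sub_mul_sq_eq_mul_sq_of_not_pow_dvd (n + 1) hn h

end Descent

theorem IsFractionRing.exists_sq_sub_mul_sq_eq_mul_sq {R F : Type*} [CommRing R] [IsDomain R]
    [Field F] [Algebra R F] [IsFractionRing R F] {π ξ : R} {a b : F}
    (h : a ^ 2 - algebraMap R F ξ * b ^ 2 = algebraMap R F π) :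
    ∃ x y z : R, z ≠ 0 ∧ x ^ 2 - ξ * y ^ 2 = π * z ^ 2 := by
  obtain ⟨xa, za, hza, rfl⟩ := IsFractionRing.div_surjective R a
  obtain ⟨xb, zb, hzb, rfl⟩ := IsFractionRing.div_surjective R b
  have hza₀ : algebraMap R F za ≠ 0 := IsFractionRing.to_map_ne_zero_of_mem_nonZeroDivisors hza
  have hzb₀ : algebraMap R F zb ≠ 0 := IsFractionRing.to_map_ne_zero_of_mem_nonZeroDivisors hzb
  refine ⟨xa * zb, xb * za, za * zb,
    mul_ne_zero (nonZeroDivisors.ne_zero hza) (nonZeroDivisors.ne_zero hzb),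
    IsFractionRing.injective R F ?_⟩
  simp only [map_sub, map_mul, map_pow]
  field_simp at h
  linear_combination h

theorem isSquare_of_sq_eq_mul_sq {K : Type*} [Field K] {x y ξ : K} (hy : y ≠ 0)
    (h : x ^ 2 = ξ * y ^ 2) : IsSquare ξ :=
  ⟨x / y, by field_simp; linear_combination -h⟩

theorem isSquare_algebraMap_mk_of_sq_sub_mul_sq_eq_mul_sq {R : Type*} [CommRing R] {π ξ : R}
    (hπ : Prime π) {x y z : R} (hy : ¬π ∣ y) (h : x ^ 2 - ξ * y ^ 2 = π * z ^ 2) :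
    IsSquare (algebraMap (R ⧸ Ideal.span {π}) (FractionRing (R ⧸ Ideal.span {π}))
      (Ideal.Quotient.mk (Ideal.span {π}) ξ)) := by
  have : IsDomain (R ⧸ Ideal.span {π}) :=
    Ideal.Quotient.isDomain_iff_prime _ |>.mpr ((Ideal.span_singleton_prime hπ.ne_zero).mpr hπ)
  set φ := (algebraMap (R ⧸ Ideal.span {π}) (FractionRing (R ⧸ Ideal.span {π}))).comp
    (Ideal.Quotient.mk (Ideal.span {π}))
  have hφπ : φ π = 0 := by simp [φ]
  have hφy : φ y ≠ 0 := by simpa [φ, Ideal.Quotient.eq_zero_iff_dvd] using hy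
  refine isSquare_of_sq_eq_mul_sq (x := φ x) hφy ?_
  have hφ := congrArg φ h
  simp only [map_sub, map_mul, map_pow, hφπ, zero_mul] at hφ
  linear_combination hφ

theorem square_mod_pi_of_norm_repr_general
    (R : Type*) [CommRing R] [IsDomain R] [UniqueFactorizationMonoid R]
    (F : Type*) [Field F] [Algebra R F] [IsFractionRing R F]
    (π : R) (hπ : Prime π) (ξ : R)
    (h : ∃ a b : F, a ^ 2 - algebraMap R F ξ * b ^ 2 = algebraMap R F π) :
    IsSquare (algebraMap (R ⧸ Ideal.span {π}) (FractionRing (R ⧸ Ideal.span {π}))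
      (Ideal.Quotient.mk (Ideal.span {π}) ξ)) := by
  obtain ⟨a, b, hab⟩ := h
  obtain ⟨x, y, z, hz, hxyz⟩ := IsFractionRing.exists_sq_sub_mul_sq_eq_mul_sq hab
  obtain ⟨x, y, z, hxyz, hy⟩ := hπ.exists_sq_sub_mul_sq_eq_mul_sq_not_dvd hz hxyz
  exact isSquare_algebraMap_mk_of_sq_sub_mul_sq_eq_mul_sq hπ hy hxyz

/-- Let `R` be a unique factorization domain with field of fractions `F`, let `π ∈ R` be a
prime element, and let `ξ` be a unit of `R`. If there exist elements `a, b ∈ F` with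
`a² − ξ·b² = π`, then the image of `ξ` in the field of fractions of `R/(π)` is a square. -/
theorem square_mod_pi_of_norm_repr
    (R : Type*) [CommRing R] [IsDomain R] [UniqueFactorizationMonoid R]
    (F : Type*) [Field F] [Algebra R F] [IsFractionRing R F]
    (π : R) (hπ : Prime π) (ξ : R) (hξ : IsUnit ξ)
    (h : ∃ a b : F, a ^ 2 - algebraMap R F ξ * b ^ 2 = algebraMap R F π) :
    IsSquare (algebraMap (R ⧸ Ideal.span {π}) (FractionRing (R ⧸ Ideal.span {π}))
      (Ideal.Quotient.mk (Ideal.span {π}) ξ)) :=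
  square_mod_pi_of_norm_repr_general R F π hπ ξ h
end

section
/- Let R be a commutative ring and L an R-module such that the canonical ring homomorphism R → End_R(L), sending r to scalar multiplication by r, is bijective. Let φ, ψ : L → L^∨ be two symmetric R-module isomorphisms. Then φ and ψ are isometric (i.e., there exists an R-module automorphism m of L with φ = m^∨ ∘ ψ ∘ m) if and only if there exists a unit ℓ ∈ Rˣ with φ = ℓ² • ψ. -/
open Module

theorem LinearMap.apply_smul_smul {R M : Type*} [CommSemiring R] [AddCommMonoid M] [Module R M]
    (B : M →ₗ[R] M →ₗ[R] R) (c : R) (x y : M) : B (c • x) (c • y) = c ^ 2 * B x y := by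
  rw [map_smul₂, map_smul, smul_eq_mul, smul_eq_mul, ← mul_assoc, sq]

-- When `R → End_R(L)` is a ring isomorphism, it identifies `Rˣ` with `Aut_R(L)`.
theorem LinearEquiv.exists_eq_smulOfUnit {R L : Type*} [CommRing R] [AddCommGroup L]
    [Module R L] (hEnd : Function.Bijective (toModuleEnd R (S := R) L)) (m : L ≃ₗ[R] L) :
    ∃ u : Rˣ, m = LinearEquiv.smulOfUnit u := by
  let e := RingEquiv.ofBijective _ hEnd
  refine ⟨Units.map e.symm.toMonoidHom
    ((LinearMap.GeneralLinearGroup.generalLinearEquiv R L).symm m), ?_⟩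
  ext x
  have hm : (m : End R L) = e (e.symm m) := (e.apply_symm_apply _).symm
  exact LinearMap.congr_fun hm x

theorem isometric_iff_differ_by_unit_square_general
    (R : Type*) [CommRing R] (L : Type*) [AddCommGroup L] [Module R L]
    (hEnd : Function.Bijective (Module.toModuleEnd R (S := R) L))
    (φ ψ : L ≃ₗ[R] Module.Dual R L) :
    (∃ m : L ≃ₗ[R] L, ∀ x y : L, φ x y = ψ (m x) (m y)) ↔
      (∃ ℓ : Rˣ, ∀ x y : L, φ x y = (ℓ : R) ^ 2 * ψ x y) := by
  have key (u : Rˣ) (x y : L) :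
      ψ (LinearEquiv.smulOfUnit u x) (LinearEquiv.smulOfUnit u y) = (u : R) ^ 2 * ψ x y :=
    (ψ : L →ₗ[R] Dual R L).apply_smul_smul (u : R) x y
  constructor
  · rintro ⟨m, hm⟩
    obtain ⟨u, rfl⟩ := LinearEquiv.exists_eq_smulOfUnit hEnd m
    exact ⟨u, fun x y => (hm x y).trans (key u x y)⟩
  · rintro ⟨ℓ, hℓ⟩
    exact ⟨LinearEquiv.smulOfUnit ℓ, fun x y => (hℓ x y).trans (key ℓ x y).symm⟩

/-- Let `R` be a commutative ring and `L` an `R`-module such that the canonical ring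
homomorphism `R → End_R(L)` is bijective.  Two symmetric isomorphisms `φ, ψ : L ≃ L^∨`
are isometric (there is an automorphism `m` of `L` with `φ = m^∨ ∘ ψ ∘ m`) if and only
if `φ = ℓ² • ψ` for some unit `ℓ ∈ Rˣ`. -/
theorem isometric_iff_differ_by_unit_square
    (R : Type*) [CommRing R] (L : Type*) [AddCommGroup L] [Module R L]
    (hEnd : Function.Bijective (Module.toModuleEnd R (S := R) L))
    (φ ψ : L ≃ₗ[R] Module.Dual R L)
    (hφ : ∀ x y : L, φ x y = φ y x) (hψ : ∀ x y : L, ψ x y = ψ y x) :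
    (∃ m : L ≃ₗ[R] L, ∀ x y : L, φ x y = ψ (m x) (m y)) ↔
      (∃ ℓ : Rˣ, ∀ x y : L, φ x y = (ℓ : R) ^ 2 * ψ x y) :=
  isometric_iff_differ_by_unit_square_general R L hEnd φ ψ
end

section
/- Let R be a commutative ring and L an R-module such that the canonical ring homomorphism R → End_R(L), sending r to scalar multiplication by r, is bijective, and assume there exists at least one symmetric R-module isomorphism φ₀ : L → L^∨. Then the assignment u ↦ u • φ₀ induces a bijection between the group Rˣ/(Rˣ)² of square classes of units of R and the set of isometry classes of symmetric R-module isomorphisms L → L^∨. -/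
/-- A symmetric `R`-module isomorphism `L ≃ L^∨` (a nondegenerate symmetric bilinear
form on `L`). -/
def SymIso (R L : Type*) [CommRing R] [AddCommGroup L] [Module R L] : Type _ :=
  {φ : L ≃ₗ[R] Module.Dual R L // ∀ x y : L, φ.1 x y = φ.1 y x}

/-- Two symmetric isomorphisms `φ, ψ : L ≃ L^∨` are isometric when there is an
`R`-module automorphism `m` of `L` with `φ = m^∨ ∘ ψ ∘ m`. -/
def SymIso.Isometric {R L : Type*} [CommRing R] [AddCommGroup L] [Module R L]
    (φ ψ : SymIso R L) : Prop :=
  ∃ m : L ≃ₗ[R] L, ∀ x y : L, φ.1.1 x y = ψ.1.1 (m x) (m y)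

/-- Multiplication of a symmetric isomorphism `L ≃ L^∨` by a unit `u ∈ Rˣ`. -/
def SymIso.unitSMul {R L : Type*} [CommRing R] [AddCommGroup L] [Module R L]
    (u : Rˣ) (φ : SymIso R L) : SymIso R L :=
  ⟨φ.1.trans (LinearEquiv.smulOfUnit u), fun x y => by
    show (u • φ.1.1 x) y = (u • φ.1.1 y) x
    simp only [LinearMap.smul_apply]
    rw [φ.2 x y]⟩

/-- The subgroup of squares of the unit group `Rˣ`. -/
def squareUnits (R : Type*) [CommRing R] : Subgroup Rˣ :=
  (powMonoidHom 2 : Rˣ →* Rˣ).range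

/-!
Since `End_R(L) = R`, every automorphism of `L` is multiplication by a unit `t`, and so is
`φ₀⁻¹ ∘ ψ` for any other symmetric isomorphism `ψ`. Hence `u ↦ u • φ₀` is a bijection from `Rˣ`
onto the symmetric isomorphisms, and an isometry, being a scalar `t`, rescales the form by `t²`;
so isometry classes are exactly the cosets of the squares.
-/

theorem exists_unit_smul_eq_of_bijective_toModuleEnd {R L : Type*} [CommRing R]
    [AddCommGroup L] [Module R L] (hL : Function.Bijective (Module.toModuleEnd R (S := R) L))
    (m : L ≃ₗ[R] L) : ∃ t : Rˣ, ∀ x, m x = (t : R) • x := by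
  let e := RingEquiv.ofBijective _ hL
  have hm : IsUnit (e.symm m) :=
    (isUnit_map_iff e.symm _).2 ((Module.End.isUnit_iff _).2 m.bijective)
  obtain ⟨t, ht⟩ := hm
  refine ⟨t, fun x => ?_⟩
  have := congrArg (fun f => f x) (congrArg e ht)
  simpa [e] using this.symm

namespace SymIso

variable {R L : Type*} [CommRing R] [AddCommGroup L] [Module R L]

lemma ext {φ ψ : SymIso R L} (h : ∀ x y, φ.1 x y = ψ.1 x y) : φ = ψ :=
  Subtype.ext (LinearEquiv.ext fun x => LinearMap.ext (h x))

@[simp]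
lemma unitSMul_apply (u : Rˣ) (φ : SymIso R L) (x y : L) :
    (unitSMul u φ).1 x y = u * φ.1 x y :=
  rfl

lemma unitSMul_unitSMul (u v : Rˣ) (φ : SymIso R L) :
    unitSMul u (unitSMul v φ) = unitSMul (u * v) φ :=
  ext fun x y => by simp [mul_assoc]

lemma isometric_unitSMul_sq (t : Rˣ) (φ : SymIso R L) : Isometric (unitSMul (t ^ 2) φ) φ :=
  ⟨LinearEquiv.smulOfUnit t, fun x y => by
    change _ = φ.1 (t • x) (t • y)
    simp [Units.smul_def, pow_two, mul_assoc]⟩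

lemma unitSMul_left_injective (hL : Function.Injective (Module.toModuleEnd R (S := R) L))
    (φ : SymIso R L) : Function.Injective (unitSMul · φ) := by
  intro u v huv
  refine Units.ext (hL (LinearMap.ext fun x => φ.1.injective (LinearMap.ext fun y => ?_)))
  simpa using congrArg (fun ψ : SymIso R L => ψ.1 x y) huv

lemma exists_eq_unitSMul (hL : Function.Bijective (Module.toModuleEnd R (S := R) L))
    (φ ψ : SymIso R L) : ∃ t : Rˣ, ψ = unitSMul t φ := by
  obtain ⟨t, ht⟩ := exists_unit_smul_eq_of_bijective_toModuleEnd hL (ψ.1.trans φ.1.symm)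
  refine ⟨t, ext fun x y => ?_⟩
  have hx : ψ.1 x = φ.1 ((t : R) • x) := by rw [← ht]; simp
  simp [hx]

lemma isometric_iff (hL : Function.Bijective (Module.toModuleEnd R (S := R) L))
    (φ ψ : SymIso R L) : Isometric φ ψ ↔ ∃ t : Rˣ, φ = unitSMul (t ^ 2) ψ := by
  refine ⟨fun ⟨m, hm⟩ => ?_, fun ⟨t, ht⟩ => ht ▸ isometric_unitSMul_sq t ψ⟩
  obtain ⟨t, ht⟩ := exists_unit_smul_eq_of_bijective_toModuleEnd hL m
  exact ⟨t, ext fun x y => (hm x y).trans (by simp [ht, pow_two, mul_assoc])⟩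

lemma isometric_unitSMul_iff (hL : Function.Bijective (Module.toModuleEnd R (S := R) L))
    (φ : SymIso R L) (u v : Rˣ) :
    Isometric (unitSMul u φ) (unitSMul v φ) ↔ u⁻¹ * v ∈ squareUnits R := by
  simp only [isometric_iff hL, unitSMul_unitSMul, (unitSMul_left_injective hL.1 φ).eq_iff]
  constructor
  · rintro ⟨t, rfl⟩
    exact ⟨t⁻¹, by simp [mul_assoc]⟩
  · rintro ⟨t, ht⟩
    refine ⟨t⁻¹, ?_⟩
    rw [powMonoidHom_apply] at ht
    rw [inv_pow, ht, mul_inv_rev, inv_inv, mul_comm v⁻¹ u, inv_mul_cancel_right]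

noncomputable def unitSMulEquiv (hL : Function.Bijective (Module.toModuleEnd R (S := R) L))
    (φ : SymIso R L) : Rˣ ≃ SymIso R L :=
  Equiv.ofBijective (unitSMul · φ) ⟨unitSMul_left_injective hL.1 φ, fun ψ =>
    (exists_eq_unitSMul hL φ ψ).imp fun _ h => h.symm⟩

end SymIso

/-- If `L` satisfies `End_R(L) ≅ R` and carries at least one symmetric isomorphism
`φ₀ : L ≃ L^∨`, then `u ↦ u • φ₀` induces a bijection between the square classes of
units `Rˣ/(Rˣ)²` and the isometry classes of symmetric isomorphisms `L ≃ L^∨`. -/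
theorem symIso_classes_equiv_square_classes
    (R : Type*) [CommRing R] (L : Type*) [AddCommGroup L] [Module R L]
    (hEnd : Function.Bijective (Module.toModuleEnd R (S := R) L))
    (φ₀ : SymIso R L) :
    ∃ e : (Rˣ ⧸ squareUnits R) ≃ Quot (SymIso.Isometric (R := R) (L := L)),
      ∀ u : Rˣ, e (QuotientGroup.mk u) = Quot.mk _ (SymIso.unitSMul u φ₀) :=
  ⟨Quot.congr (SymIso.unitSMulEquiv hEnd φ₀) fun u v =>
    QuotientGroup.leftRel_apply.trans (SymIso.isometric_unitSMul_iff hEnd φ₀ u v).symm,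
    fun _ => rfl⟩
end

section
/- Let R be a unique factorization domain with field of fractions F, let π ∈ R be a prime element, and let ξ be a unit of R whose image in the field of fractions of R/(π) is not a square. Then the quaternion norm form ⟨1, −ξ, −π, πξ⟩ is anisotropic over F: for all x, y, z, w ∈ F, if x² − ξ·y² − π·z² + π·ξ·w² = 0 then x = y = z = w = 0. -/
/-! Reducing `x² - ξy² - πz² + πξw² = 0` modulo `π` gives `x² ≡ ξy²`, and since `ξ` is not a
square modulo `π`, both `x` and `y` are divisible by `π`. Dividing the equation by `π` swaps the
roles of the pairs `(x, y)` and `(z, w)`, so `z` and `w` are divisible by `π` as well and the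
quotient is again a solution. Hence an integral solution is divisible by every power of `π`, so it
vanishes; a solution over `F` is reduced to an integral one by clearing denominators. -/

section QuaternionNormForm

variable {A : Type*} [CommRing A]

def quaternionNormForm (ξ π a b c d : A) : A :=
  a ^ 2 - ξ * b ^ 2 - π * c ^ 2 + π * ξ * d ^ 2

theorem quaternionNormForm_eq_sub_mul (ξ π a b c d : A) :
    quaternionNormForm ξ π a b c d = a ^ 2 - ξ * b ^ 2 - π * (c ^ 2 - ξ * d ^ 2) := by
  unfold quaternionNormForm; ring

theorem quaternionNormForm_mul_mul (ξ π a b c d : A) :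
    quaternionNormForm ξ π (π * a) (π * b) c d = -(π * quaternionNormForm ξ π c d a b) := by
  unfold quaternionNormForm; ring

theorem quaternionNormForm_smul (ξ π t a b c d : A) :
    quaternionNormForm ξ π (t * a) (t * b) (t * c) (t * d) =
      t ^ 2 * quaternionNormForm ξ π a b c d := by
  unfold quaternionNormForm; ring

theorem map_quaternionNormForm {B : Type*} [CommRing B] (f : A →+* B) (ξ π a b c d : A) :
    f (quaternionNormForm ξ π a b c d) =
      quaternionNormForm (f ξ) (f π) (f a) (f b) (f c) (f d) := by
  simp only [quaternionNormForm, map_add, map_sub, map_mul, map_pow]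

end QuaternionNormForm

theorem eq_zero_of_sq_eq_mul_sq {K : Type*} [Field K] {ξ a b : K} (hξ : ¬IsSquare ξ)
    (h : a ^ 2 = ξ * b ^ 2) : a = 0 ∧ b = 0 := by
  have hb : b = 0 := by
    by_contra hb
    exact hξ ⟨a / b, by field_simp; linear_combination -h⟩
  exact ⟨pow_eq_zero_iff two_ne_zero |>.mp (by simpa [hb] using h), hb⟩

theorem eq_zero_of_forall_pow_dvd {α : Type*} [CommMonoidWithZero α] [IsCancelMulZero α]
    [WfDvdMonoid α] {p a : α} (hp : Prime p) (h : ∀ n : ℕ, p ^ n ∣ a) : a = 0 := by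
  by_contra ha
  obtain ⟨n, hn⟩ := FiniteMultiplicity.def.mp (FiniteMultiplicity.of_prime_left hp ha)
  exact hn (h (n + 1))

section Descent

variable {R : Type*} [CommRing R] {π ξ : R} (hπ : Prime π)
  (hns : ¬IsSquare (algebraMap (R ⧸ Ideal.span {π}) (FractionRing (R ⧸ Ideal.span {π}))
    (Ideal.Quotient.mk (Ideal.span {π}) ξ)))
include hπ hns

theorem dvd_and_dvd_of_dvd_sq_sub_mul_sq {a b : R} (h : π ∣ a ^ 2 - ξ * b ^ 2) :
    π ∣ a ∧ π ∣ b := by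
  have := (Ideal.span_singleton_prime hπ.ne_zero).mpr hπ
  let f := (algebraMap _ (FractionRing (R ⧸ Ideal.span {π}))).comp
    (Ideal.Quotient.mk (Ideal.span {π}))
  have hf : ∀ r : R, f r = 0 ↔ π ∣ r := fun r => by
    rw [RingHom.comp_apply, (IsFractionRing.injective _ _).eq_iff' (map_zero _),
      Ideal.Quotient.eq_zero_iff_mem, Ideal.mem_span_singleton]
  have hsq : f a ^ 2 = f ξ * f b ^ 2 := by
    rw [← sub_eq_zero, ← map_pow, ← map_pow, ← map_mul, ← map_sub, hf]
    exact h
  obtain ⟨ha, hb⟩ := eq_zero_of_sq_eq_mul_sq hns hsq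
  exact ⟨(hf a).mp ha, (hf b).mp hb⟩

theorem exists_eq_mul_of_quaternionNormForm_eq_zero [IsDomain R] {a b c d : R}
    (h : quaternionNormForm ξ π a b c d = 0) :
    ∃ a' b', a = π * a' ∧ b = π * b' ∧ quaternionNormForm ξ π c d a' b' = 0 := by
  rw [quaternionNormForm_eq_sub_mul, sub_eq_zero] at h
  obtain ⟨⟨a', rfl⟩, ⟨b', rfl⟩⟩ :=
    dvd_and_dvd_of_dvd_sq_sub_mul_sq hπ hns (h ▸ dvd_mul_right _ _)
  refine ⟨a', b', rfl, rfl, ?_⟩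
  have h' : quaternionNormForm ξ π (π * a') (π * b') c d = 0 := by
    rw [quaternionNormForm_eq_sub_mul, h, sub_self]
  rw [quaternionNormForm_mul_mul, neg_eq_zero] at h'
  exact (mul_eq_zero.mp h').resolve_left hπ.ne_zero

theorem pow_dvd_of_quaternionNormForm_eq_zero [IsDomain R] (n : ℕ) {a b c d : R}
    (h : quaternionNormForm ξ π a b c d = 0) :
    π ^ n ∣ a ∧ π ^ n ∣ b ∧ π ^ n ∣ c ∧ π ^ n ∣ d := by
  induction n generalizing a b c d with
  | zero => simp
  | succ n ih =>
    obtain ⟨a', b', rfl, rfl, h₁⟩ := exists_eq_mul_of_quaternionNormForm_eq_zero hπ hns h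
    obtain ⟨c', d', rfl, rfl, h₂⟩ := exists_eq_mul_of_quaternionNormForm_eq_zero hπ hns h₁
    obtain ⟨ha, hb, hc, hd⟩ := ih h₂
    simp only [pow_succ']
    exact ⟨mul_dvd_mul_left π ha, mul_dvd_mul_left π hb, mul_dvd_mul_left π hc,
      mul_dvd_mul_left π hd⟩

theorem eq_zero_of_quaternionNormForm_eq_zero [IsDomain R] [WfDvdMonoid R] {a b c d : R}
    (h : quaternionNormForm ξ π a b c d = 0) : a = 0 ∧ b = 0 ∧ c = 0 ∧ d = 0 := by
  have hpow n := pow_dvd_of_quaternionNormForm_eq_zero hπ hns n h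
  exact ⟨eq_zero_of_forall_pow_dvd hπ fun n => (hpow n).1,
    eq_zero_of_forall_pow_dvd hπ fun n => (hpow n).2.1,
    eq_zero_of_forall_pow_dvd hπ fun n => (hpow n).2.2.1,
    eq_zero_of_forall_pow_dvd hπ fun n => (hpow n).2.2.2⟩

end Descent

theorem quaternionNormForm_anisotropic_of_isFractionRing {R F : Type*} [CommRing R] [Field F]
    [Algebra R F] [IsFractionRing R F] {ξ π : R}
    (h : ∀ a b c d : R, quaternionNormForm ξ π a b c d = 0 → a = 0 ∧ b = 0 ∧ c = 0 ∧ d = 0)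
    (x y z w : F)
    (hxyzw : quaternionNormForm (algebraMap R F ξ) (algebraMap R F π) x y z w = 0) :
    x = 0 ∧ y = 0 ∧ z = 0 ∧ w = 0 := by
  obtain ⟨t, ht⟩ :=
    IsLocalization.exist_integer_multiples_of_finite (nonZeroDivisors R) ![x, y, z, w]
  obtain ⟨a, ha⟩ := ht 0
  obtain ⟨b, hb⟩ := ht 1
  obtain ⟨c, hc⟩ := ht 2
  obtain ⟨d, hd⟩ := ht 3
  simp only [Matrix.cons_val, Algebra.smul_def] at ha hb hc hd
  have habcd : quaternionNormForm ξ π a b c d = 0 := by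
    apply IsFractionRing.injective R F
    rw [map_quaternionNormForm, ha, hb, hc, hd, quaternionNormForm_smul, hxyzw, mul_zero, map_zero]
  have of_integer {u : F} {r : R} (hu : algebraMap R F r = algebraMap R F t * u) (hr : r = 0) :
      u = 0 := by
    rwa [hr, map_zero, eq_comm, mul_eq_zero, or_iff_right (IsLocalization.map_units F t).ne_zero]
      at hu
  obtain ⟨ha0, hb0, hc0, hd0⟩ := h a b c d habcd
  exact ⟨of_integer ha ha0, of_integer hb hb0, of_integer hc hc0, of_integer hd hd0⟩

theorem quaternion_norm_form_anisotropic_general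
    (R : Type*) [CommRing R] [IsDomain R] [UniqueFactorizationMonoid R]
    (F : Type*) [Field F] [Algebra R F] [IsFractionRing R F]
    (π : R) (hπ : Prime π) (ξ : R)
    (hns : ¬ IsSquare (algebraMap (R ⧸ Ideal.span {π}) (FractionRing (R ⧸ Ideal.span {π}))
      (Ideal.Quotient.mk (Ideal.span {π}) ξ))) :
    ∀ x y z w : F,
      x ^ 2 - algebraMap R F ξ * y ^ 2 - algebraMap R F π * z ^ 2
          + algebraMap R F π * algebraMap R F ξ * w ^ 2 = 0 →
        x = 0 ∧ y = 0 ∧ z = 0 ∧ w = 0 :=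
  quaternionNormForm_anisotropic_of_isFractionRing fun _ _ _ _ =>
    eq_zero_of_quaternionNormForm_eq_zero hπ hns

/-- Let `R` be a unique factorization domain with field of fractions `F`, let `π ∈ R` be a
prime element, and let `ξ` be a unit of `R` whose image in the field of fractions of
`R/(π)` is not a square.  Then the quaternion norm form `⟨1, −ξ, −π, πξ⟩` is anisotropic
over `F`. -/
theorem quaternion_norm_form_anisotropic
    (R : Type*) [CommRing R] [IsDomain R] [UniqueFactorizationMonoid R]
    (F : Type*) [Field F] [Algebra R F] [IsFractionRing R F]
    (π : R) (hπ : Prime π) (ξ : R) (hξ : IsUnit ξ)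
    (hns : ¬ IsSquare (algebraMap (R ⧸ Ideal.span {π}) (FractionRing (R ⧸ Ideal.span {π}))
      (Ideal.Quotient.mk (Ideal.span {π}) ξ))) :
    ∀ x y z w : F,
      x ^ 2 - algebraMap R F ξ * y ^ 2 - algebraMap R F π * z ^ 2
          + algebraMap R F π * algebraMap R F ξ * w ^ 2 = 0 →
        x = 0 ∧ y = 0 ∧ z = 0 ∧ w = 0 :=
  quaternion_norm_form_anisotropic_general R F π hπ ξ hns
end

section
/- Let R be a unique factorization domain with field of fractions F of characteristic different from 2, let π ∈ R be a prime element, and let ξ, ζ be units of R such that the image of ξ·ζ in the field of fractions of R/(π) is not a square. Then the quadratic forms x² − ξ·y² − π·z² + π·ξ·w² and x² − ζ·y² − π·z² + π·ζ·w² over F are not equivalent (there is no linear isometry between them). -/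
/-!
Write `q_ξ = ⟨1, -ξ, -π, πξ⟩ = ⟨1⟩ ⊥ ⟨-π⟩ ⊥ ⟨-ξ, πξ⟩`. Since `2 ≠ 0`, reflections act transitively
on vectors of a given nonzero length, which gives Witt cancellation of one-dimensional
nondegenerate summands. An isometry `q_ξ ≅ q_ζ` therefore leaves `⟨-ξ, πξ⟩ ≅ ⟨-ζ, πζ⟩`, and the
image of `(1, 0)` shows that `-ξ = -ζc² + πζd²`, i.e. `ξζ = x² - πy²` in `F`. Clearing denominators,
`ξζt² = r² - πs²` in `R`; if `π ∣ t` then `π ∣ r` and `π ∣ s`, and we may divide by `π²`. As `t` has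
finite `π`-adic valuation in the UFD `R`, we reach `π ∤ t`, and then `ξζ ≡ (r/t)²` modulo `π`.
-/

section QuadraticForms

open QuadraticMap

namespace QuadraticMap

variable {R M N : Type*} [CommRing R] [AddCommGroup M] [AddCommGroup N] [Module R M] [Module R N]

theorem map_sub_eq_add_sub_polar (Q : QuadraticMap R M N) (x y : M) :
    Q (x - y) = Q x + Q y - polar Q x y := by
  rw [sub_eq_add_neg, ← Q.map_neg y, ← neg_neg (polar Q x y), ← polar_neg_right, polar]
  abel

theorem IsometryEquiv.polar_map_map {M' : Type*} [AddCommGroup M'] [Module R M']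
    {Q : QuadraticMap R M N} {Q' : QuadraticMap R M' N} (g : Q.IsometryEquiv Q') (x y : M) :
    polar Q' (g x) (g y) = polar Q x y := by
  simp only [polar, ← map_add, IsometryEquiv.map_app]

end QuadraticMap

namespace QuadraticForm

variable {F V : Type*} [Field F] [AddCommGroup V] [Module F V]

theorem inv_smul_polarBilin_apply_self (Q : QuadraticForm F V) {v : V} (hv : Q v ≠ 0) :
    ((Q v)⁻¹ • polarBilin Q v) v = 2 := by
  simp [polar_self, nsmul_eq_mul]; field_simp

def reflection (Q : QuadraticForm F V) (v : V) (hv : Q v ≠ 0) : Q.IsometryEquiv Q where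
  toLinearEquiv := Module.reflection (inv_smul_polarBilin_apply_self Q hv)
  map_app' x := by
    show Q (Module.reflection _ x) = Q x
    simp only [Module.reflection_apply, LinearMap.smul_apply, polarBilin_apply_apply, smul_eq_mul,
      map_sub_eq_add_sub_polar, Q.map_smul, polar_smul_right, polar_comm Q v x]
    field_simp
    ring

theorem reflection_apply (Q : QuadraticForm F V) (v : V) (hv : Q v ≠ 0) (x : V) :
    Q.reflection v hv x = x - ((Q v)⁻¹ * polar Q v x) • v :=
  Module.reflection_apply x (inv_smul_polarBilin_apply_self Q hv)

theorem reflection_sub_apply_of_eq (Q : QuadraticForm F V) {u v : V} (huv : Q u = Q v)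
    (h : Q (u - v) ≠ 0) : Q.reflection (u - v) h u = v := by
  have : polar Q (u - v) u = Q (u - v) := by
    rw [polar_sub_left, polar_self, map_sub_eq_add_sub_polar, huv, nsmul_eq_mul, polar_comm]; ring
  rw [reflection_apply, this, inv_mul_cancel₀ h, one_smul, sub_sub_cancel]

theorem exists_isometryEquiv_apply_eq (h2 : (2 : F) ≠ 0) (Q : QuadraticForm F V) {u v : V}
    (hu : Q u ≠ 0) (huv : Q u = Q v) : ∃ g : Q.IsometryEquiv Q, g u = v := by
  by_cases h : Q (u - v) = 0
  · -- `Q (u + v) + Q (u - v) = 4 Q u`: reflect `u` to `-v` in `u + v`, then `-v` to `v`.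
    have hsum : Q (u - -v) ≠ 0 := by
      rw [map_sub_eq_add_sub_polar, polar_neg_right, Q.map_neg, ← huv]
      rw [map_sub_eq_add_sub_polar, ← huv] at h
      rw [show Q u + Q u - -polar Q u v = 2 * 2 * Q u by linear_combination -h]
      exact mul_ne_zero (mul_ne_zero h2 h2) hu
    have hv : Q (-v - v) ≠ 0 := by
      rw [← neg_add', Q.map_neg, map_add_self, ← huv, nsmul_eq_mul, Nat.cast_ofNat,
        show (4 : F) = 2 * 2 by norm_num]
      exact mul_ne_zero (mul_ne_zero h2 h2) hu
    refine ⟨(Q.reflection _ hsum).trans (Q.reflection _ hv), ?_⟩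
    show Q.reflection _ hv (Q.reflection _ hsum u) = v
    rw [reflection_sub_apply_of_eq Q (by rw [Q.map_neg, huv]) hsum,
      reflection_sub_apply_of_eq Q (Q.map_neg v) hv]
  · exact ⟨Q.reflection _ h, reflection_sub_apply_of_eq Q huv h⟩


section Cancel

variable {M₁ M₂ : Type*} [AddCommGroup M₁] [Module F M₁] [AddCommGroup M₂] [Module F M₂]
  {Q₁ : QuadraticForm F M₁} {Q₂ : QuadraticForm F M₂}

theorem apply_zero_eq_of_apply_one_zero (h2 : (2 : F) ≠ 0) {a : F} (ha : a ≠ 0)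
    (ψ : ((a • QuadraticMap.sq).prod Q₁).IsometryEquiv ((a • QuadraticMap.sq).prod Q₂))
    (hψ : ψ (1, 0) = (1, 0)) (m : M₁) : ψ (0, m) = (0, (ψ (0, m)).2) := by
  have horth := ψ.polar_map_map (0, m) (1, 0)
  simp only [hψ, polar_prod, polar_zero_right, add_zero] at horth
  simp only [polar, smul_apply, sq_apply, smul_eq_mul, mul_one, zero_add, mul_zero, sub_zero,
    sub_self] at horth
  refine Prod.ext ?_ rfl
  have h2ac : 2 * a * (ψ (0, m)).1 = 0 := by linear_combination horth
  simpa [h2, ha] using h2ac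

theorem _root_.QuadraticMap.Equivalent.of_smul_sq_prod (h2 : (2 : F) ≠ 0) {a : F} (ha : a ≠ 0)
    (h : ((a • QuadraticMap.sq).prod Q₁).Equivalent ((a • QuadraticMap.sq).prod Q₂)) :
    Q₁.Equivalent Q₂ := by
  obtain ⟨φ⟩ := h
  obtain ⟨g, hg⟩ := exists_isometryEquiv_apply_eq h2
    ((a • QuadraticMap.sq).prod Q₂) (u := φ (1, 0)) (v := (1, 0)) (by simp [φ.map_app, ha])
    (by simp [φ.map_app])
  set ψ := φ.trans g
  have hψ : ψ (1, 0) = (1, 0) := hg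
  have hψ' : ψ.symm (1, 0) = (1, 0) := ψ.symm_apply_eq.mpr hψ.symm
  let L := LinearMap.snd F F M₂ ∘ₗ ψ.toLinearEquiv.toLinearMap ∘ₗ LinearMap.inr F F M₁
  let L' := LinearMap.snd F F M₁ ∘ₗ ψ.symm.toLinearEquiv.toLinearMap ∘ₗ LinearMap.inr F F M₂
  have hL : ∀ m, ψ (0, m) = (0, L m) := apply_zero_eq_of_apply_one_zero h2 ha ψ hψ
  have hL' : ∀ m, ψ.symm (0, m) = (0, L' m) :=
    apply_zero_eq_of_apply_one_zero h2 ha ψ.symm hψ'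
  have hLL' : L ∘ₗ L' = .id := by
    ext m
    simp [L, ← hL']
  have hL'L : L' ∘ₗ L = .id := by
    ext m
    simp [L', ← hL]
  exact ⟨⟨.ofLinearMap L L' hLL' hL'L, fun m => by simpa [hL] using ψ.map_app (0, m)⟩⟩

end Cancel

theorem weightedSumSquares_four_equivalent_prod (a b c d : F) :
    (weightedSumSquares F ![a, b, c, d]).Equivalent
      ((a • QuadraticMap.sq).prod ((c • QuadraticMap.sq).prod
        ((b • QuadraticMap.sq).prod (d • QuadraticMap.sq)))) := by
  refine ⟨⟨⟨⟨⟨fun v => (v 0, v 2, v 1, v 3), fun _ _ => rfl⟩, fun _ _ => rfl⟩,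
    fun p => ![p.1, p.2.2.1, p.2.1, p.2.2.2], fun v => ?_, fun _ => rfl⟩, fun v => ?_⟩⟩
  · ext i
    fin_cases i <;> rfl
  · simp only [prod_apply, smul_apply, sq_apply, smul_eq_mul, weightedSumSquares_apply,
      Fin.sum_univ_four, Matrix.cons_val_zero, Matrix.cons_val_one, Matrix.cons_val]
    ring

end QuadraticForm

end QuadraticForms

section Descent

variable {R : Type*} [CommRing R] [IsDomain R] {π : R}

theorem Prime.mul_sq_eq_sq_sub_mul_sq_descent (hπ : Prime π) {u t r s : R}
    (h : u * (π * t) ^ 2 = r ^ 2 - π * s ^ 2) : ∃ r' s', u * t ^ 2 = r' ^ 2 - π * s' ^ 2 := by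
  obtain ⟨r', rfl⟩ : π ∣ r := hπ.dvd_of_dvd_pow (n := 2) ⟨u * π * t ^ 2 + s ^ 2, by
    linear_combination -h⟩
  have h' : u * π * t ^ 2 = π * r' ^ 2 - s ^ 2 :=
    mul_left_cancel₀ hπ.ne_zero (by linear_combination h)
  obtain ⟨s', rfl⟩ : π ∣ s := hπ.dvd_of_dvd_pow (n := 2) ⟨r' ^ 2 - u * t ^ 2, by
    linear_combination h'⟩
  exact ⟨r', s', mul_left_cancel₀ hπ.ne_zero (by linear_combination h')⟩

theorem Prime.exists_not_dvd_dvd_mul_sq_sub_sq (hπ : Prime π) {u t r s : R}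
    (ht : FiniteMultiplicity π t) (h : u * t ^ 2 = r ^ 2 - π * s ^ 2) :
    ∃ a b, ¬π ∣ b ∧ π ∣ u * b ^ 2 - a ^ 2 := by
  obtain ⟨n, hn⟩ := ht
  induction n generalizing t r s with
  | zero => exact ⟨r, t, by simpa using hn, -s ^ 2, by linear_combination h⟩
  | succ n ih =>
    by_cases hπt : π ∣ t
    · obtain ⟨t, rfl⟩ := hπt
      obtain ⟨r', s', h'⟩ := hπ.mul_sq_eq_sq_sub_mul_sq_descent h
      exact ih h' fun hd => hn (pow_succ' π (n + 1) ▸ mul_dvd_mul_left π hd)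
    · exact ⟨r, t, hπt, -s ^ 2, by linear_combination h⟩

end Descent

section FractionRing

variable {A K : Type*} [CommRing A] [Field K] [Algebra A K] [IsFractionRing A K]

theorem isSquare_algebraMap_of_mul_sq_eq_sq {u a b : A} (hb : b ≠ 0) (h : u * b ^ 2 = a ^ 2) :
    IsSquare (algebraMap A K u) := by
  have hb' : algebraMap A K b ≠ 0 := (IsFractionRing.to_map_eq_zero_iff (K := K)).not.mpr hb
  refine ⟨algebraMap A K a / algebraMap A K b, ?_⟩
  rw [div_mul_div_comm, eq_div_iff (mul_ne_zero hb' hb')]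
  simpa only [map_mul, map_pow, sq] using congrArg (algebraMap A K) h

theorem IsFractionRing.exists_mul_sq_eq_sq_sub_mul_sq [IsDomain A] {u c : A} {x y : K}
    (h : algebraMap A K u = x ^ 2 - algebraMap A K c * y ^ 2) :
    ∃ t r s : A, t ≠ 0 ∧ u * t ^ 2 = r ^ 2 - c * s ^ 2 := by
  obtain ⟨r₁, t₁, ht₁, rfl⟩ := IsFractionRing.div_surjective (A := A) x
  obtain ⟨r₂, t₂, ht₂, rfl⟩ := IsFractionRing.div_surjective (A := A) y
  refine ⟨t₁ * t₂, r₁ * t₂, r₂ * t₁,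
    mul_ne_zero (nonZeroDivisors.ne_zero ht₁) (nonZeroDivisors.ne_zero ht₂),
    IsFractionRing.injective A K ?_⟩
  have h₁ := IsFractionRing.to_map_ne_zero_of_mem_nonZeroDivisors (K := K) ht₁
  have h₂ := IsFractionRing.to_map_ne_zero_of_mem_nonZeroDivisors (K := K) ht₂
  field_simp at h
  simp only [map_mul, map_sub, map_pow]
  linear_combination h

end FractionRing

theorem Prime.isSquare_residue_of_algebraMap_eq_sq_sub_mul_sq {R F : Type*} [CommRing R]
    [IsDomain R] [WfDvdMonoid R] [Field F] [Algebra R F] [IsFractionRing R F] {π : R}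
    (hπ : Prime π) {u : R} {x y : F} (h : algebraMap R F u = x ^ 2 - algebraMap R F π * y ^ 2) :
    IsSquare (algebraMap (R ⧸ Ideal.span {π}) (FractionRing (R ⧸ Ideal.span {π}))
      (Ideal.Quotient.mk (Ideal.span {π}) u)) := by
  obtain ⟨t, r, s, ht, h⟩ := IsFractionRing.exists_mul_sq_eq_sq_sub_mul_sq h
  obtain ⟨a, b, hb, hab⟩ := hπ.exists_not_dvd_dvd_mul_sq_sub_sq (.of_prime_left hπ ht) h
  have := (Ideal.span_singleton_prime hπ.ne_zero).mpr hπ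
  refine isSquare_algebraMap_of_mul_sq_eq_sq (a := Ideal.Quotient.mk _ a)
    (b := Ideal.Quotient.mk _ b) ?_ ?_
  · rwa [ne_eq, Ideal.Quotient.eq_zero_iff_mem, Ideal.mem_span_singleton]
  · rw [← map_pow, ← map_pow, ← map_mul, Ideal.Quotient.eq, Ideal.mem_span_singleton]
    exact hab

theorem quaternion_norm_forms_not_equivalent_general
    (R : Type*) [CommRing R] [IsDomain R] [UniqueFactorizationMonoid R]
    (F : Type*) [Field F] [Algebra R F] [IsFractionRing R F]
    (h2 : (2 : F) ≠ 0)
    (π : R) (hπ : Prime π) (ξ ζ : R)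
    (hns : ¬ IsSquare (algebraMap (R ⧸ Ideal.span {π}) (FractionRing (R ⧸ Ideal.span {π}))
      (Ideal.Quotient.mk (Ideal.span {π}) (ξ * ζ)))) :
    ¬ (QuadraticMap.weightedSumSquares F
        ![1, -(algebraMap R F ξ), -(algebraMap R F π), algebraMap R F π * algebraMap R F ξ]).Equivalent
      (QuadraticMap.weightedSumSquares F
        ![1, -(algebraMap R F ζ), -(algebraMap R F π), algebraMap R F π * algebraMap R F ζ]) := by
  intro h
  have hπ0 : algebraMap R F π ≠ 0 := (IsFractionRing.to_map_eq_zero_iff).not.mpr hπ.ne_zero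
  have h' := ((QuadraticForm.weightedSumSquares_four_equivalent_prod _ _ _ _).symm.trans h).trans
    (QuadraticForm.weightedSumSquares_four_equivalent_prod _ _ _ _)
  obtain ⟨φ⟩ := (h'.of_smul_sq_prod h2 one_ne_zero).of_smul_sq_prod h2 (neg_ne_zero.mpr hπ0)
  -- `-ζ c² + πζ d² = -ξ` for `(c, d) = φ (1, 0)`, so `ξζ = (ζc)² - π(ζd)²`.
  have hrep := φ.map_app (1, 0)
  simp only [QuadraticMap.prod_apply, smul_apply, QuadraticMap.sq_apply, smul_eq_mul,
    mul_one, mul_zero, add_zero] at hrep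
  refine hns (hπ.isSquare_residue_of_algebraMap_eq_sq_sub_mul_sq
    (x := algebraMap R F ζ * (φ (1, 0)).1) (y := algebraMap R F ζ * (φ (1, 0)).2) ?_)
  rw [map_mul]
  linear_combination algebraMap R F ζ * hrep

/-- Let `R` be a unique factorization domain with field of fractions `F` of characteristic
different from `2`, let `π ∈ R` be a prime element, and let `ξ, ζ` be units of `R` such that
the image of `ξ·ζ` in the field of fractions of `R/(π)` is not a square.  Then the quadratic
forms `⟨1, −ξ, −π, πξ⟩` and `⟨1, −ζ, −π, πζ⟩` over `F` are not equivalent. -/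
theorem quaternion_norm_forms_not_equivalent
    (R : Type*) [CommRing R] [IsDomain R] [UniqueFactorizationMonoid R]
    (F : Type*) [Field F] [Algebra R F] [IsFractionRing R F]
    (h2 : (2 : F) ≠ 0)
    (π : R) (hπ : Prime π) (ξ ζ : R) (hξ : IsUnit ξ) (hζ : IsUnit ζ)
    (hns : ¬ IsSquare (algebraMap (R ⧸ Ideal.span {π}) (FractionRing (R ⧸ Ideal.span {π}))
      (Ideal.Quotient.mk (Ideal.span {π}) (ξ * ζ)))) :
    ¬ (QuadraticMap.weightedSumSquares F
        ![1, -(algebraMap R F ξ), -(algebraMap R F π), algebraMap R F π * algebraMap R F ξ]).Equivalent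
      (QuadraticMap.weightedSumSquares F
        ![1, -(algebraMap R F ζ), -(algebraMap R F π), algebraMap R F π * algebraMap R F ζ]) :=
  quaternion_norm_forms_not_equivalent_general R F h2 π hπ ξ ζ hns
end

section
/- Let R be a commutative ring and L a finitely generated projective R-module such that there exists an R-module isomorphism L ⊗[R] L ≅ R. Then the commutativity isomorphism τ : L ⊗[R] L → L ⊗[R] L determined by x ⊗ y ↦ y ⊗ x is the identity map; consequently, every R-bilinear form B : L × L → R is symmetric. -/
/-!
The swap fixes every `x ⊗ₜ x`, so it is the identity once these squares span `L ⊗[R] L`, that is,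
once the values `e (x ⊗ₜ x)` generate the unit ideal. As `L ⊗[R] L ≅ R`, the module `L` is
invertible, so at every prime `p` the localization `L_p` is free of rank one. A generator of `L_p`
can be taken of the form `x / 1`, and then `e (x ⊗ₜ x)` is a unit in `R_p`, i.e. it avoids `p`.
-/

open TensorProduct

theorem LinearEquiv.span_singleton_apply_eq_top {A M N : Type*} [Semiring A]
    [AddCommMonoid M] [Module A M] [AddCommMonoid N] [Module A N] (G : M ≃ₗ[A] N) {t : M}
    (ht : A ∙ t = ⊤) : A ∙ G t = ⊤ := by
  rw [← Set.image_singleton, ← G.coe_toLinearMap, ← Submodule.map_span, ht, Submodule.map_top]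
  exact G.range

theorem Submodule.span_singleton_tmul_self_eq_top {A M : Type*} [CommSemiring A]
    [AddCommMonoid M] [Module A M] {ℓ : M} (hℓ : A ∙ ℓ = ⊤) : A ∙ ℓ ⊗ₜ[A] ℓ = ⊤ := by
  rw [← map₂_mk_top_top_eq_top, ← hℓ, map₂_span_span, Set.image2_singleton]
  rfl

theorem Module.Invertible.exists_span_singleton_eq_top {A M : Type*} [CommSemiring A]
    [IsLocalRing A] [AddCommMonoid M] [Module A M] [Module.Invertible A M] :
    ∃ ℓ : M, A ∙ ℓ = ⊤ := by
  obtain ⟨φ⟩ := Module.Invertible.free_iff_linearEquiv.mp (inferInstance : Module.Free A M)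
  exact ⟨φ.symm 1, φ.symm.span_singleton_apply_eq_top Ideal.span_singleton_one⟩

theorem IsLocalization.exists_span_singleton_one_tmul_eq_top {R A M : Type*} [CommSemiring R]
    [CommSemiring A] [Algebra R A] (S : Submonoid R) [IsLocalization S A] [AddCommMonoid M]
    [Module R M] {ℓ : A ⊗[R] M} (hℓ : A ∙ ℓ = ⊤) : ∃ x : M, A ∙ (1 : A) ⊗ₜ[R] x = ⊤ := by
  obtain ⟨⟨x, s⟩, hx⟩ := IsLocalizedModule.surj S (TensorProduct.mk R A M 1) ℓ
  have hx : (1 : A) ⊗ₜ[R] x = algebraMap R A s • ℓ := by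
    rw [algebraMap_smul]
    exact hx.symm
  exact ⟨x, by rw [hx, Submodule.span_singleton_smul_eq (IsLocalization.map_units A s), hℓ]⟩

section SelfDual

variable {R L : Type*} [CommSemiring R] [AddCommMonoid L] [Module R L]

theorem exists_apply_tmul_self_notMem (e : L ⊗[R] L ≃ₗ[R] R) (p : Ideal R) [p.IsPrime] :
    ∃ x : L, e (x ⊗ₜ x) ∉ p := by
  let A := Localization.AtPrime p
  have := Module.Invertible.left e
  obtain ⟨ℓ, hℓ⟩ := Module.Invertible.exists_span_singleton_eq_top (A := A) (M := A ⊗[R] L)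
  obtain ⟨x, hx⟩ := IsLocalization.exists_span_singleton_one_tmul_eq_top p.primeCompl hℓ
  let G : (A ⊗[R] L) ⊗[A] (A ⊗[R] L) ≃ₗ[A] A :=
    (AlgebraTensorModule.distribBaseChange R A L L).symm ≪≫ₗ e.baseChange R A _ _ ≪≫ₗ
      AlgebraTensorModule.rid R A A
  have hG : G ((1 ⊗ₜ x) ⊗ₜ (1 ⊗ₜ x)) = algebraMap R A (e (x ⊗ₜ x)) := by
    simp [G, Algebra.algebraMap_eq_smul_one]
  refine ⟨x, fun hmem => ?_⟩
  have hunit : IsUnit (G ((1 ⊗ₜ x) ⊗ₜ (1 ⊗ₜ x))) :=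
    Ideal.span_singleton_eq_top.mp
      (G.span_singleton_apply_eq_top (Submodule.span_singleton_tmul_self_eq_top hx))
  rw [hG, IsLocalization.AtPrime.isUnit_to_map_iff A p] at hunit
  exact hunit hmem

theorem span_range_tmul_self_eq_top (e : L ⊗[R] L ≃ₗ[R] R) :
    Submodule.span R (Set.range fun x : L => x ⊗ₜ[R] x) = ⊤ := by
  rw [← Submodule.map_eq_top_iff (e := e), Submodule.map_span]
  by_contra hne
  obtain ⟨m, hm, hle⟩ := Ideal.exists_le_maximal _ hne
  obtain ⟨x, hx⟩ := exists_apply_tmul_self_notMem e m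
  exact hx (hle (Submodule.subset_span ⟨x ⊗ₜ x, ⟨x, rfl⟩, rfl⟩))

end SelfDual

theorem tensor_comm_eq_id_and_bilinear_symm_general
    (R : Type*) [CommRing R] (L : Type*) [AddCommGroup L] [Module R L]
    (h : Nonempty ((L ⊗[R] L) ≃ₗ[R] R)) :
    TensorProduct.comm R L L = LinearEquiv.refl R (L ⊗[R] L) ∧
      ∀ B : L →ₗ[R] L →ₗ[R] R, ∀ x y : L, B x y = B y x := by
  obtain ⟨e⟩ := h
  have hτ : TensorProduct.comm R L L = LinearEquiv.refl R (L ⊗[R] L) :=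
    LinearEquiv.toLinearMap_injective <|
      LinearMap.ext_on_range (span_range_tmul_self_eq_top e) fun x => rfl
  refine ⟨hτ, fun B x y => ?_⟩
  have hswap : y ⊗ₜ[R] x = x ⊗ₜ[R] y := LinearEquiv.congr_fun hτ (x ⊗ₜ y)
  exact congrArg (TensorProduct.lift B) hswap.symm

/-- Let `R` be a commutative ring and `L` a finitely generated projective `R`-module with
`L ⊗[R] L ≅ R`.  Then the commutativity isomorphism `τ : L ⊗[R] L → L ⊗[R] L`,
`x ⊗ y ↦ y ⊗ x`, is the identity; consequently, every `R`-bilinear form `B : L × L → R`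
is symmetric. -/
theorem tensor_comm_eq_id_and_bilinear_symm
    (R : Type*) [CommRing R] (L : Type*) [AddCommGroup L] [Module R L]
    [Module.Finite R L] [Module.Projective R L]
    (h : Nonempty ((L ⊗[R] L) ≃ₗ[R] R)) :
    TensorProduct.comm R L L = LinearEquiv.refl R (L ⊗[R] L) ∧
      ∀ B : L →ₗ[R] L →ₗ[R] R, ∀ x y : L, B x y = B y x :=
  tensor_comm_eq_id_and_bilinear_symm_general R L h
end

section
/- Let R be a commutative ring and L a finitely generated projective R-module such that there exists an R-module isomorphism f : L ⊗[R] L ≅ R. Then there exists an R-module isomorphism φ : L → Hom_R(L, R) which is symmetric, i.e., φ(x)(y) = φ(y)(x) for all x, y ∈ L; in other words, L carries a nondegenerate symmetric bilinear form. -/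
open TensorProduct

theorem exists_symmetric_nondegenerate_form_general
    (R : Type*) [CommRing R] (L : Type*) [AddCommGroup L] [Module R L]
    (f : (L ⊗[R] L) ≃ₗ[R] R) :
    ∃ φ : L ≃ₗ[R] Module.Dual R L, ∀ x y : L, φ x y = φ y x := by
  have : Module.Invertible R L := .left f
  refine ⟨Module.Invertible.linearEquivDual f, fun x y => ?_⟩
  change f (x ⊗ₜ y) = f (y ⊗ₜ x)
  rw [Module.Invertible.tmul_comm]

/-- Let `R` be a commutative ring and `L` a finitely generated projective `R`-module with an
`R`-module isomorphism `f : L ⊗[R] L ≅ R`.  Then there exists a symmetric `R`-module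
isomorphism `φ : L ≃ L^∨`, i.e. `L` carries a nondegenerate symmetric bilinear form. -/
theorem exists_symmetric_nondegenerate_form
    (R : Type*) [CommRing R] (L : Type*) [AddCommGroup L] [Module R L]
    [Module.Finite R L] [Module.Projective R L]
    (f : (L ⊗[R] L) ≃ₗ[R] R) :
    ∃ φ : L ≃ₗ[R] Module.Dual R L, ∀ x y : L, φ x y = φ y x :=
  exists_symmetric_nondegenerate_form_general R L f
end
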